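/- arXiv:2211.13692 — 3 statements merged into one kernel-verified Lean document; each statement's English description precedes it below -/
import Mathlib

section
/- (Trade-off Theorem) Let Ψ : R^m → R^n be η-accurate over X, let x, x' ∈ X with x ≠ x', and set ẽ = A(x' − x), assumed nonzero with ‖ẽ‖ ≤ ε. Then the ε-stability constant C^ε_Ψ = sup over z ∈ X, 0 < ‖e‖ ≤ ε of (‖Ψ(Az + e) − z‖ − η)/‖e‖ satisfies C^ε_Ψ ≥ (‖x − x'‖ − 2η)/‖ẽ‖. -/
/-!
Perturbing the measurement `A x` by `ẽ = A (x' - x)` produces exactly the measurement `A x'`,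
which `Ψ` maps to within `η` of `x'` and hence at least `‖x - x'‖ - η` away from `x`.
So the pair `(x, ẽ)` is admissible in the supremum defining the stability constant, and its
quotient already exceeds the claimed bound.
-/

noncomputable def mulVecE {m n : ℕ} (A : Matrix (Fin m) (Fin n) ℝ)
    (x : EuclideanSpace ℝ (Fin n)) : EuclideanSpace ℝ (Fin m) :=
  Matrix.toEuclideanLin A x

theorem mulVecE_add_mulVecE_sub {m n : ℕ} (A : Matrix (Fin m) (Fin n) ℝ)
    (x x' : EuclideanSpace ℝ (Fin n)) :
    mulVecE A x + mulVecE A (x' - x) = mulVecE A x' := by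
  simp only [mulVecE, map_sub, add_sub_cancel]

theorem norm_sub_sub_two_mul_le {E : Type*} [SeminormedAddCommGroup E] {u x x' : E} {η : ℝ}
    (h : ‖u - x'‖ ≤ η) : ‖x - x'‖ - 2 * η ≤ ‖u - x‖ - η := by
  have := norm_sub_le_norm_sub_add_norm_sub x u x'
  rw [norm_sub_rev x u] at this
  linarith

theorem stmt_4_general {m n : ℕ} (A : Matrix (Fin m) (Fin n) ℝ)
    (X : Set (EuclideanSpace ℝ (Fin n))) (ε η : ℝ)
    (Ψ : EuclideanSpace ℝ (Fin m) → EuclideanSpace ℝ (Fin n))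
    (hacc : ∀ z ∈ X, ‖Ψ (mulVecE A z) - z‖ ≤ η)
    (x x' : EuclideanSpace ℝ (Fin n)) (hx : x ∈ X) (hx' : x' ∈ X)
    (hte : mulVecE A (x' - x) ≠ 0) (hε' : ‖mulVecE A (x' - x)‖ ≤ ε)
    (hbdd : BddAbove {c : ℝ | ∃ z ∈ X, ∃ e : EuclideanSpace ℝ (Fin m),
        0 < ‖e‖ ∧ ‖e‖ ≤ ε ∧ c = (‖Ψ (mulVecE A z + e) - z‖ - η) / ‖e‖}) :
    sSup {c : ℝ | ∃ z ∈ X, ∃ e : EuclideanSpace ℝ (Fin m),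
        0 < ‖e‖ ∧ ‖e‖ ≤ ε ∧ c = (‖Ψ (mulVecE A z + e) - z‖ - η) / ‖e‖} ≥
      (‖x - x'‖ - 2 * η) / ‖mulVecE A (x' - x)‖ := by
  refine le_trans ?_ (le_csSup hbdd ⟨x, hx, _, norm_pos_iff.mpr hte, hε', rfl⟩)
  rw [mulVecE_add_mulVecE_sub]
  exact div_le_div_of_nonneg_right (norm_sub_sub_two_mul_le (hacc x' hx')) (norm_nonneg _)

/-- Trade-off Theorem: the ε-stability constant is at least
(‖x − x'‖ − 2η)/‖ẽ‖ where ẽ = A(x' − x). -/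
theorem stmt_4 {m n : ℕ} (A : Matrix (Fin m) (Fin n) ℝ)
    (X : Set (EuclideanSpace ℝ (Fin n))) (ε η : ℝ) (hε : 0 < ε) (hη : 0 ≤ η)
    (Ψ : EuclideanSpace ℝ (Fin m) → EuclideanSpace ℝ (Fin n))
    (hacc : ∀ z ∈ X, ‖Ψ (mulVecE A z) - z‖ ≤ η)
    (x x' : EuclideanSpace ℝ (Fin n)) (hx : x ∈ X) (hx' : x' ∈ X)
    (hne : x ≠ x')
    (hte : mulVecE A (x' - x) ≠ 0) (hε' : ‖mulVecE A (x' - x)‖ ≤ ε)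
    (hbdd : BddAbove {c : ℝ | ∃ z ∈ X, ∃ e : EuclideanSpace ℝ (Fin m),
        0 < ‖e‖ ∧ ‖e‖ ≤ ε ∧ c = (‖Ψ (mulVecE A z + e) - z‖ - η) / ‖e‖}) :
    sSup {c : ℝ | ∃ z ∈ X, ∃ e : EuclideanSpace ℝ (Fin m),
        0 < ‖e‖ ∧ ‖e‖ ≤ ε ∧ c = (‖Ψ (mulVecE A z + e) - z‖ - η) / ‖e‖} ≥
      (‖x - x'‖ - 2 * η) / ‖mulVecE A (x' - x)‖ :=
  stmt_4_general A X ε η Ψ hacc x x' hx hx' hte hε' hbdd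
end

section
/- Let Ψ : R^m → R^n be η-accurate over X and let x, x' ∈ X satisfy 0 < ‖A(x − x')‖ < η ≤ ε. Then the local ε-Lipschitz constant of Ψ at y = Ax, defined as sup over z with 0 < ‖z − y‖ ≤ ε of ‖Ψ(z) − Ψ(y)‖/‖z − y‖, is at least (‖x − x'‖ − 2η)/ε. -/
theorem sub_two_mul_le_dist_of_dist_le {α : Type*} [PseudoMetricSpace α] {a b u v : α}
    {η : ℝ} (hu : dist u a ≤ η) (hv : dist v b ≤ η) : dist a b - 2 * η ≤ dist u v := by
  have := dist_triangle4 a u v b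
  rw [dist_comm a u] at this
  linarith

theorem div_le_div_of_le_of_le_right {a b d ε : ℝ} (hab : a ≤ b) (hb : 0 ≤ b) (hd : 0 < d)
    (hdε : d ≤ ε) : a / ε ≤ b / d :=
  calc a / ε ≤ max a 0 / ε := div_le_div_of_nonneg_right (le_max_left a 0) (hd.le.trans hdε)
    _ ≤ b / d := div_le_div₀ hb (max_le hab hb) hd hdε

theorem div_le_csSup_diffQuotients {E F : Type*} [SeminormedAddCommGroup E]
    [SeminormedAddCommGroup F] {Ψ : E → F} {y z : E} {ε a : ℝ}
    (hbdd : BddAbove {c : ℝ | ∃ w : E, 0 < ‖w - y‖ ∧ ‖w - y‖ ≤ ε ∧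
      c = ‖Ψ w - Ψ y‖ / ‖w - y‖})
    (hz : 0 < ‖z - y‖) (hzε : ‖z - y‖ ≤ ε) (ha : a ≤ ‖Ψ z - Ψ y‖) :
    a / ε ≤ sSup {c : ℝ | ∃ w : E, 0 < ‖w - y‖ ∧ ‖w - y‖ ≤ ε ∧
      c = ‖Ψ w - Ψ y‖ / ‖w - y‖} :=
  (div_le_div_of_le_of_le_right ha (norm_nonneg _) hz hzε).trans
    (le_csSup hbdd ⟨z, hz, hzε, rfl⟩)

theorem stmt_5_general {m n : ℕ} (A : Matrix (Fin m) (Fin n) ℝ)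
    (X : Set (EuclideanSpace ℝ (Fin n))) (ε η : ℝ) (hηε : η ≤ ε)
    (Ψ : EuclideanSpace ℝ (Fin m) → EuclideanSpace ℝ (Fin n))
    (hacc : ∀ z ∈ X, ‖Ψ (mulVecE A z) - z‖ ≤ η)
    (x x' : EuclideanSpace ℝ (Fin n)) (hx : x ∈ X) (hx' : x' ∈ X)
    (h0 : 0 < ‖mulVecE A (x - x')‖) (hlt : ‖mulVecE A (x - x')‖ < η)
    (hbdd : BddAbove {c : ℝ | ∃ z : EuclideanSpace ℝ (Fin m),
        0 < ‖z - mulVecE A x‖ ∧ ‖z - mulVecE A x‖ ≤ ε ∧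
        c = ‖Ψ z - Ψ (mulVecE A x)‖ / ‖z - mulVecE A x‖}) :
    sSup {c : ℝ | ∃ z : EuclideanSpace ℝ (Fin m),
        0 < ‖z - mulVecE A x‖ ∧ ‖z - mulVecE A x‖ ≤ ε ∧
        c = ‖Ψ z - Ψ (mulVecE A x)‖ / ‖z - mulVecE A x‖} ≥
      (‖x - x'‖ - 2 * η) / ε := by
  have hmeas : ‖mulVecE A x' - mulVecE A x‖ = ‖mulVecE A (x - x')‖ := by
    rw [mulVecE, mulVecE, mulVecE, map_sub, norm_sub_rev]
  have hrecon : ‖x - x'‖ - 2 * η ≤ ‖Ψ (mulVecE A x') - Ψ (mulVecE A x)‖ := by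
    rw [← dist_eq_norm, ← dist_eq_norm, dist_comm x]
    exact sub_two_mul_le_dist_of_dist_le ((dist_eq_norm _ _).trans_le (hacc x' hx'))
      ((dist_eq_norm _ _).trans_le (hacc x hx))
  exact div_le_csSup_diffQuotients hbdd (hmeas ▸ h0) (hmeas ▸ hlt.le.trans hηε) hrecon

/-- If 0 < ‖A(x − x')‖ < η ≤ ε, the local ε-Lipschitz constant of Ψ at y = Ax
is at least (‖x − x'‖ − 2η)/ε. -/
theorem stmt_5 {m n : ℕ} (A : Matrix (Fin m) (Fin n) ℝ)
    (X : Set (EuclideanSpace ℝ (Fin n))) (ε η : ℝ) (hη : 0 < η) (hηε : η ≤ ε)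
    (Ψ : EuclideanSpace ℝ (Fin m) → EuclideanSpace ℝ (Fin n))
    (hacc : ∀ z ∈ X, ‖Ψ (mulVecE A z) - z‖ ≤ η)
    (x x' : EuclideanSpace ℝ (Fin n)) (hx : x ∈ X) (hx' : x' ∈ X)
    (h0 : 0 < ‖mulVecE A (x - x')‖) (hlt : ‖mulVecE A (x - x')‖ < η)
    (hbdd : BddAbove {c : ℝ | ∃ z : EuclideanSpace ℝ (Fin m),
        0 < ‖z - mulVecE A x‖ ∧ ‖z - mulVecE A x‖ ≤ ε ∧
        c = ‖Ψ z - Ψ (mulVecE A x)‖ / ‖z - mulVecE A x‖}) :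
    sSup {c : ℝ | ∃ z : EuclideanSpace ℝ (Fin m),
        0 < ‖z - mulVecE A x‖ ∧ ‖z - mulVecE A x‖ ≤ ε ∧
        c = ‖Ψ z - Ψ (mulVecE A x)‖ / ‖z - mulVecE A x‖} ≥
      (‖x - x'‖ - 2 * η) / ε :=
  stmt_5_general A X ε η hηε Ψ hacc x x' hx hx' h0 hlt hbdd
end

section
/- Let Ψ be an η-accurate reconstructor over X for the problem with matrix A, and suppose there exist x, x' ∈ X with 0 < ‖A(x−x')‖ < η ≤ ε and ‖x − x'‖ = η/σ_t (σ_t > 0 a singular value of A). Then the local ε-Lipschitz constant of Ψ over Y = A(X) is at least (η − 2σ_t η)/(ε σ_t). Consequently, if σ_t ≤ η/(ε + 2η), this lower bound is ≥ 1, so Ψ cannot have ε-Lipschitz constant less than 1 over Y. -/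
/-! If `Ψ` is `η`-accurate, the triangle inequality `d(x, x') ≤ η + d(Ψ(Ax), Ψ(Ax')) + η`
forces `Ψ` to stretch the short segment from `Ax'` to `Ax` (of length `< η ≤ ε`) to length
at least `η / σ_t - 2η`, so some difference quotient in the definition of `L^ε(Ψ, A(X))` is
at least `(η / σ_t - 2η) / ε`. -/

section LocalLipschitz

variable {α β : Type*} [PseudoMetricSpace α] [PseudoMetricSpace β]

/-- The difference quotients whose supremum is the local `ε`-Lipschitz constant `L^ε(Ψ, Y)`. -/
def localLipschitzRatios (Ψ : β → α) (Y : Set β) (ε : ℝ) : Set ℝ :=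
  {c | ∃ y ∈ Y, ∃ w, 0 < dist w y ∧ dist w y ≤ ε ∧ c = dist (Ψ w) (Ψ y) / dist w y}

theorem dist_sub_two_mul_le_dist {a b u v : α} {η : ℝ} (ha : dist u a ≤ η)
    (hb : dist v b ≤ η) : dist a b - 2 * η ≤ dist u v := by
  have := dist_triangle4 a u v b
  rw [dist_comm a u] at this
  linarith

theorem div_le_sSup_localLipschitzRatios_of_accurate {f : α → β} {Ψ : β → α} {X : Set α}
    {ε η : ℝ} (hacc : ∀ z ∈ X, dist (Ψ (f z)) z ≤ η)
    (hbdd : BddAbove (localLipschitzRatios Ψ (f '' X) ε)) {x x' : α} (hx : x ∈ X) (hx' : x' ∈ X)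
    (hpos : 0 < dist (f x) (f x')) (hle : dist (f x) (f x') ≤ ε) :
    (dist x x' - 2 * η) / ε ≤ sSup (localLipschitzRatios Ψ (f '' X) ε) := by
  have hmem : dist (Ψ (f x)) (Ψ (f x')) / dist (f x) (f x') ∈
      localLipschitzRatios Ψ (f '' X) ε :=
    ⟨f x', Set.mem_image_of_mem f hx', f x, hpos, hle, rfl⟩
  refine le_trans ?_ (le_csSup hbdd hmem)
  calc (dist x x' - 2 * η) / ε ≤ dist (Ψ (f x)) (Ψ (f x')) / ε := by
        gcongr
        · exact hpos.le.trans hle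
        · exact dist_sub_two_mul_le_dist (hacc x hx) (hacc x' hx')
    _ ≤ dist (Ψ (f x)) (Ψ (f x')) / dist (f x) (f x') := by gcongr

end LocalLipschitz

theorem mulVecE_sub {m n : ℕ} (A : Matrix (Fin m) (Fin n) ℝ) (x x' : EuclideanSpace ℝ (Fin n)) :
    mulVecE A (x - x') = mulVecE A x - mulVecE A x' :=
  map_sub _ x x'

theorem one_le_div_sub_two_mul {ε η σ : ℝ} (hη : 0 < η) (hε : 0 < ε) (hσ : 0 < σ)
    (h : σ ≤ η / (ε + 2 * η)) : 1 ≤ (η / σ - 2 * η) / ε := by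
  rw [one_le_div hε, le_sub_iff_add_le, le_div_iff₀ hσ, mul_comm]
  rwa [le_div_iff₀ (by positivity)] at h

/-- If there are x, x' ∈ X with 0 < ‖A(x−x')‖ < η ≤ ε and ‖x − x'‖ = η/σ_t, the
ε-local Lipschitz constant of Ψ over Y = A(X) is at least (η − 2σ_t η)/(ε σ_t);
hence if σ_t ≤ η/(ε + 2η) it is at least 1. -/
theorem stmt_7 {m n : ℕ} (A : Matrix (Fin m) (Fin n) ℝ)
    (X : Set (EuclideanSpace ℝ (Fin n))) (ε η σt : ℝ)
    (hη : 0 < η) (hηε : η ≤ ε) (hσt : 0 < σt)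
    (Ψ : EuclideanSpace ℝ (Fin m) → EuclideanSpace ℝ (Fin n))
    (hacc : ∀ z ∈ X, ‖Ψ (mulVecE A z) - z‖ ≤ η)
    (x x' : EuclideanSpace ℝ (Fin n)) (hx : x ∈ X) (hx' : x' ∈ X)
    (h0 : 0 < ‖mulVecE A (x - x')‖) (hlt : ‖mulVecE A (x - x')‖ < η)
    (hdist : ‖x - x'‖ = η / σt)
    (hbdd : BddAbove {c : ℝ | ∃ z ∈ X, ∃ w : EuclideanSpace ℝ (Fin m),
        0 < ‖w - mulVecE A z‖ ∧ ‖w - mulVecE A z‖ ≤ ε ∧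
        c = ‖Ψ w - Ψ (mulVecE A z)‖ / ‖w - mulVecE A z‖}) :
    sSup {c : ℝ | ∃ z ∈ X, ∃ w : EuclideanSpace ℝ (Fin m),
        0 < ‖w - mulVecE A z‖ ∧ ‖w - mulVecE A z‖ ≤ ε ∧
        c = ‖Ψ w - Ψ (mulVecE A z)‖ / ‖w - mulVecE A z‖} ≥
      (η - 2 * σt * η) / (ε * σt) ∧
    (σt ≤ η / (ε + 2 * η) →
      1 ≤ sSup {c : ℝ | ∃ z ∈ X, ∃ w : EuclideanSpace ℝ (Fin m),
        0 < ‖w - mulVecE A z‖ ∧ ‖w - mulVecE A z‖ ≤ ε ∧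
        c = ‖Ψ w - Ψ (mulVecE A z)‖ / ‖w - mulVecE A z‖}) := by
  have hratios : {c : ℝ | ∃ z ∈ X, ∃ w : EuclideanSpace ℝ (Fin m),
      0 < ‖w - mulVecE A z‖ ∧ ‖w - mulVecE A z‖ ≤ ε ∧
      c = ‖Ψ w - Ψ (mulVecE A z)‖ / ‖w - mulVecE A z‖} =
      localLipschitzRatios Ψ (mulVecE A '' X) ε := by
    simp only [localLipschitzRatios, Set.exists_mem_image, dist_eq_norm]
  rw [hratios] at hbdd ⊢
  rw [mulVecE_sub, ← dist_eq_norm] at h0 hlt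
  rw [← dist_eq_norm] at hdist
  have hbound := div_le_sSup_localLipschitzRatios_of_accurate (f := mulVecE A)
    (by simpa only [dist_eq_norm] using hacc) hbdd hx hx' h0 (hlt.le.trans hηε)
  rw [hdist] at hbound
  have hrewrite : (η - 2 * σt * η) / (ε * σt) = (η / σt - 2 * η) / ε := by
    field_simp
  refine ⟨hrewrite ▸ hbound, fun hσ => ?_⟩
  exact (one_le_div_sub_two_mul hη (hη.trans_le hηε) hσt hσ).trans hbound
end
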